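/- Let G = {(r,θ) : 0 ≤ θ ≤ ζ, r ≥ 0} be a two-dimensional wedge of angle ζ ∈ (0,π) (in polar coordinates), with edges ∂G₁ = {θ = 0} and ∂G₂ = {θ = ζ}, inward normals n¹, n², and constant reflection vectors γ¹, γ² normalized so that ⟨γ^j, n^j⟩ = 1, where γ^j makes angle θ_j ∈ (−π/2, π/2) with n^j. Suppose (θ₁+θ₂)/ζ < 1 (so the completely-S condition holds). Then there exists a vector n₀ = s₁n¹ + s₂n² with s₁, s₂ > 0 such that ⟨n₀, γ¹⟩ > 0, ⟨n₀, γ²⟩ > 0, and ⟨n₀, x⟩ > 0 for every x ∈ Ḡ \ {0}. -/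

import Mathlib

/-!
Write `angleVec φ = (cos φ, sin φ)`. Then `n¹ = angleVec (π/2)`, `n² = angleVec (ζ - π/2)`,
`γ¹ ∝ angleVec (θ₁ + π/2)`, `γ² ∝ angleVec (ζ - θ₂ - π/2)` with positive factors `1 / cos θⱼ`,
and `angleVec a ⬝ᵥ angleVec b = cos (a - b)`. Take `n₀ = angleVec φ`; it is a positive
combination of `n¹, n²` as soon as `ζ - π/2 < φ < π/2`, and all three inner products are
positive as soon as `φ` is within `π/2` of `θ₁ + π/2`, of `ζ - θ₂ - π/2` and of every angle
in `[0, ζ]`. These constraints on `φ` are compatible because `θ₁ + θ₂ < ζ`.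
-/

open Matrix Real

noncomputable def angleVec (φ : ℝ) : Fin 2 → ℝ := ![cos φ, sin φ]

lemma angleVec_dotProduct_angleVec (a b : ℝ) : angleVec a ⬝ᵥ angleVec b = cos (a - b) := by
  simp [angleVec, dotProduct, Fin.sum_univ_two, cos_sub]

lemma sin_sub_smul_angleVec (a b φ : ℝ) :
    sin (b - a) • angleVec φ = sin (b - φ) • angleVec a + sin (φ - a) • angleVec b := by
  ext i
  fin_cases i <;> simp [angleVec, sin_sub] <;> ring

lemma exists_pos_smul_add_smul_eq_angleVec {a b φ : ℝ} (haφ : a < φ) (hφb : φ < b)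
    (hba : b - a < π) :
    ∃ s t : ℝ, 0 < s ∧ 0 < t ∧ s • angleVec a + t • angleVec b = angleVec φ := by
  have hpos {x : ℝ} (hx0 : 0 < x) (hx : x < π) : 0 < sin x := sin_pos_of_pos_of_lt_pi hx0 hx
  have hab : 0 < sin (b - a) := hpos (by linarith) hba
  refine ⟨sin (b - φ) / sin (b - a), sin (φ - a) / sin (b - a),
    div_pos (hpos (by linarith) (by linarith)) hab,
    div_pos (hpos (by linarith) (by linarith)) hab, ?_⟩
  rw [div_eq_inv_mul, div_eq_inv_mul, mul_smul, mul_smul, ← smul_add,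
    ← sin_sub_smul_angleVec, inv_smul_smul₀ hab.ne']

lemma angleVec_pi_div_two : angleVec (π / 2) = ![0, 1] := by
  simp [angleVec]

lemma angleVec_sub_pi_div_two (ζ : ℝ) : angleVec (ζ - π / 2) = ![sin ζ, -cos ζ] := by
  simp [angleVec, cos_sub_pi_div_two, sin_sub_pi_div_two]

lemma neg_tan_one_eq_smul_angleVec {θ : ℝ} (hθ : cos θ ≠ 0) :
    ![-tan θ, 1] = (cos θ)⁻¹ • angleVec (θ + π / 2) := by
  ext i
  fin_cases i <;>
    simp [angleVec, tan_eq_sin_div_cos, cos_add_pi_div_two, sin_add_pi_div_two, hθ]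
  ring

lemma sin_sub_tan_mul_cos_eq_smul_angleVec {ζ θ : ℝ} (hθ : cos θ ≠ 0) :
    ![sin ζ - tan θ * cos ζ, -cos ζ - tan θ * sin ζ] =
      (cos θ)⁻¹ • angleVec (ζ - θ - π / 2) := by
  rw [angleVec_sub_pi_div_two]
  ext i
  fin_cases i <;> simp [tan_eq_sin_div_cos, sin_sub, cos_sub] <;> field_simp
  ring

lemma mul_cos_mul_sin_eq_smul_angleVec (r θ : ℝ) : ![r * cos θ, r * sin θ] = r • angleVec θ := by
  ext i
  fin_cases i <;> simp [angleVec]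

/-- for a two-dimensional wedge of angle ζ ∈ (0,π) with constant
reflection vectors γ¹, γ² making angles θ₁, θ₂ ∈ (−π/2,π/2) with the inward
normals n¹, n² (normalized so ⟨γ^j, n^j⟩ = 1), if (θ₁+θ₂)/ζ < 1 then some
strictly positive combination n₀ = s₁n¹ + s₂n² satisfies ⟨n₀,γ¹⟩ > 0,
⟨n₀,γ²⟩ > 0, and ⟨n₀,x⟩ > 0 for all x ∈ Ḡ \ {0}. -/
theorem stmt_14 (ζ θ₁ θ₂ : ℝ)
    (hζ0 : 0 < ζ) (hζπ : ζ < Real.pi)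
    (hθ₁ : θ₁ ∈ Set.Ioo (-(Real.pi / 2)) (Real.pi / 2))
    (hθ₂ : θ₂ ∈ Set.Ioo (-(Real.pi / 2)) (Real.pi / 2))
    (hα : (θ₁ + θ₂) / ζ < 1)
    (G : Set (Fin 2 → ℝ))
    (hG : G = {p | ∃ rad θ : ℝ, 0 ≤ rad ∧ 0 ≤ θ ∧ θ ≤ ζ ∧
      p = ![rad * Real.cos θ, rad * Real.sin θ]})
    (n1 n2 γ1 γ2 : Fin 2 → ℝ)
    (hn1 : n1 = ![0, 1])
    (hn2 : n2 = ![Real.sin ζ, -Real.cos ζ])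
    (hγ1 : γ1 = ![-Real.tan θ₁, 1])
    (hγ2 : γ2 = ![Real.sin ζ - Real.tan θ₂ * Real.cos ζ,
      -Real.cos ζ - Real.tan θ₂ * Real.sin ζ]) :
    ∃ s₁ s₂ : ℝ, 0 < s₁ ∧ 0 < s₂ ∧
      0 < (s₁ • n1 + s₂ • n2) ⬝ᵥ γ1 ∧
      0 < (s₁ • n1 + s₂ • n2) ⬝ᵥ γ2 ∧
      ∀ p ∈ G, p ≠ 0 → 0 < (s₁ • n1 + s₂ • n2) ⬝ᵥ p := by
  obtain ⟨h1l, h1r⟩ := hθ₁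
  obtain ⟨h2l, h2r⟩ := hθ₂
  have hsum : θ₁ + θ₂ < ζ := by linarith [(div_lt_one hζ0).mp hα]
  obtain ⟨φ, hφlo, hφhi⟩ : ∃ φ, max θ₁ (ζ - π / 2) < φ ∧ φ < min (π / 2) (ζ - θ₂) :=
    exists_between <| max_lt (lt_min (by linarith) (by linarith))
      (lt_min (by linarith) (by linarith))
  rw [max_lt_iff] at hφlo
  rw [lt_min_iff] at hφhi
  obtain ⟨s₂, s₁, hs₂, hs₁, hn₀⟩ :=
    exists_pos_smul_add_smul_eq_angleVec hφlo.2 hφhi.1 (by linarith : π / 2 - (ζ - π / 2) < π)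
  have hcos {x : ℝ} (hlo : -(π / 2) < x) (hhi : x < π / 2) : 0 < cos x :=
    cos_pos_of_mem_Ioo ⟨hlo, hhi⟩
  have hc₁ := hcos h1l h1r
  have hc₂ := hcos h2l h2r
  refine ⟨s₁, s₂, hs₁, hs₂, ?_, ?_, ?_⟩
  all_goals rw [hn1, hn2, ← angleVec_pi_div_two, ← angleVec_sub_pi_div_two, add_comm, hn₀]
  · rw [hγ1, neg_tan_one_eq_smul_angleVec hc₁.ne', dotProduct_smul, angleVec_dotProduct_angleVec, smul_eq_mul]
    exact mul_pos (inv_pos.2 hc₁) (hcos (by linarith) (by linarith))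
  · rw [hγ2, sin_sub_tan_mul_cos_eq_smul_angleVec hc₂.ne', dotProduct_smul, angleVec_dotProduct_angleVec, smul_eq_mul]
    exact mul_pos (inv_pos.2 hc₂) (hcos (by linarith) (by linarith))
  · rintro p hp hp0
    obtain ⟨r, θ, hr, hθ0, hθζ, rfl⟩ := hG ▸ hp
    have hr0 : r ≠ 0 := by rintro rfl; simp at hp0
    rw [mul_cos_mul_sin_eq_smul_angleVec, dotProduct_smul, angleVec_dotProduct_angleVec, smul_eq_mul]
    exact mul_pos (hr.lt_of_ne' hr0) (hcos (by linarith) (by linarith))
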